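/- Fixed-point truth lemma: let ⟨W, →, ⊩⟩ be a Kripke model with worlds w₁, …, wₙ, and let u₁, …, uₙ be pairwise distinct natural numbers such that for every i ≤ n and every x : ℕ, ζ_{u_i}(x) = {u_k | ∃ j, x = u_j ∧ w_j →_{w_i} w_k}. Let the valuation * be defined on propositional variables by p* = {u_i | w_i ⊩ p}. Then for every formula φ of 𝓛 and every 1 ≤ i ≤ n: u_i ∈ φ* if and only if w_i ⊩ φ. -/
import Mathlib


/-- Formulas of the modal language 𝓛: propositional variables, ⊥, →, and ▷. -/
inductive Formula : Type
  | var : ℕ → Formula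
  | bot : Formula
  | imp : Formula → Formula → Formula
  | tri : Formula → Formula → Formula
deriving DecidableEq

namespace Formula

/-- ¬φ := φ → ⊥ -/
def neg (φ : Formula) : Formula := imp φ bot
/-- ⊤ := ¬⊥ -/
def top : Formula := neg bot
/-- φ ∨ ψ := ¬φ → ψ -/
def disj (φ ψ : Formula) : Formula := imp (neg φ) ψ
/-- φ ∧ ψ := ¬(φ → ¬ψ) -/
def conj (φ ψ : Formula) : Formula := neg (imp φ (neg ψ))

/-- `φ` is a substitution instance of a classical propositional tautology:
it evaluates to `true` under every boolean valuation of formulas that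
respects `⊥` and `→` (variables and `▷`-formulas are treated as atoms). -/
def IsPropTaut (φ : Formula) : Prop :=
  ∀ v : Formula → Bool, v bot = false →
    (∀ a b, v (imp a b) = (!(v a) || v b)) → v φ = true

/-- Hilbert-style provability.  `Prv false` is the logic ℜ (axioms: classical
tautologies, A1, A2, A3; rules: Modus Ponens and monotonicity M);
`Prv true` is the logic ℜ_d, which additionally has axiom A4. -/
inductive Prv : Bool → Formula → Prop
  | taut {d : Bool} {φ} : IsPropTaut φ → Prv d φ
  | a1 {d : Bool} (φ ψ χ) : Prv d (imp (tri φ ψ) (imp (tri χ ψ) (tri (disj φ χ) ψ)))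
  | a2 {d : Bool} (φ) : Prv d (tri bot φ)
  | a3 {d : Bool} (φ) : Prv d (tri φ top)
  | a4 (φ ψ χ) : Prv true (imp (tri φ ψ) (imp (tri φ χ) (tri φ (conj ψ χ))))
  | mp {d : Bool} {φ ψ} : Prv d (imp φ ψ) → Prv d φ → Prv d ψ
  | mono {d : Bool} {φ₁ φ₂ ψ₁ ψ₂} : Prv d (imp φ₁ φ₂) → Prv d (imp ψ₁ ψ₂) →
      Prv d (imp (tri φ₂ ψ₁) (tri φ₁ ψ₂))

/-- `Deriv d Δ φ`: φ is derivable from the hypotheses Δ together with all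
theorems of the logic (`Prv d`) using only Modus Ponens. -/
inductive Deriv (d : Bool) (Δ : Set Formula) : Formula → Prop
  | hyp {φ} : φ ∈ Δ → Deriv d Δ φ
  | thm {φ} : Prv d φ → Deriv d Δ φ
  | mp {φ ψ} : Deriv d Δ (imp φ ψ) → Deriv d Δ φ → Deriv d Δ ψ

/-- Conjunction of a list of formulas (empty conjunction is ⊤). -/
def conjList : List Formula → Formula
  | [] => top
  | φ :: l => conj φ (conjList l)

/-- ⋀Γ : conjunction of all formulas of a finite set Γ (⋀∅ = ⊤). -/
noncomputable def bigConj (Γ : Finset Formula) : Formula := conjList Γ.toList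

/-- A set of formulas is consistent if ⊥ is not derivable from it. -/
def Consistent (d : Bool) (Δ : Set Formula) : Prop := ¬ Deriv d Δ bot

/-- The pair (u,v) is w-consistent: w ⊬ ⋀u ▷ ¬⋀v. -/
def WCons (d : Bool) (w : Set Formula) (u v : Finset Formula) : Prop :=
  ¬ Deriv d w (tri (bigConj u) (neg (bigConj v)))

/-- The operation ∼: ∼(¬φ) = φ, and ∼φ = ¬φ if φ is not a negation. -/
def simNeg : Formula → Formula
  | imp φ bot => φ
  | φ => neg φ

/-- Φ is closed under subformulas. -/
def SubClosed (Φ : Finset Formula) : Prop :=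
  (∀ a b, imp a b ∈ Φ → a ∈ Φ ∧ b ∈ Φ) ∧ (∀ a b, tri a b ∈ Φ → a ∈ Φ ∧ b ∈ Φ)

/-- Φ is closed under the operation ∼. -/
def SimClosed (Φ : Finset Formula) : Prop := ∀ φ ∈ Φ, simNeg φ ∈ Φ

/-- w is a maximal consistent subset of Φ: w ⊆ Φ, w is consistent, and for
every φ ∈ Φ either φ ∈ w or ∼φ ∈ w. -/
def MaxCons (d : Bool) (Φ : Finset Formula) (w : Finset Formula) : Prop :=
  w ⊆ Φ ∧ Consistent d ↑w ∧ ∀ φ ∈ Φ, φ ∈ w ∨ simNeg φ ∈ w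

/-- Kripke forcing: `rel w u v` means u →_w v, `val w p` means w ⊩ p. -/
def Forces {W : Type*} (rel : W → W → W → Prop) (val : W → ℕ → Prop) :
    W → Formula → Prop
  | w, var p => val w p
  | _, bot => False
  | w, imp a b => Forces rel val w a → Forces rel val w b
  | w, tri a b => ∀ u v, rel w u v → Forces rel val u a →
      ∃ v', rel w u v' ∧ Forces rel val v' b

end Formula

/-- A Kripke model: a finite set of worlds, a ternary computability relation,
and a forcing relation between worlds and propositional variables. -/
structure KripkeModel where
  W : Type
  fin : Finite W
  rel : W → W → W → Prop
  val : W → ℕ → Prop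

/-- A Kripke model is deterministic if for all worlds w, u there is at most
one v with u →_w v. -/
def KripkeModel.Deterministic (M : KripkeModel) : Prop :=
  ∀ w u v v', M.rel w u v → M.rel w u v' → v = v'

/-- Forcing in a Kripke model. -/
def KripkeModel.Forces (M : KripkeModel) : M.W → Formula → Prop :=
  Formula.Forces M.rel M.val

/-- The standard enumeration of nondeterministic partial recursive functions:
ζ_w(u) = the set of possible outputs of machine (code) w on input u. -/
def zeta (w u : ℕ) : Set ℕ :=
  {v | ((Denumerable.ofNat Nat.Partrec.Code w).eval (Nat.pair u v)).Dom}

/-- The standard enumeration of deterministic partial recursive functions: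
ξ_w(u) = the value of the partial recursive function with code w on input u. -/
def xi (w u : ℕ) : Part ℕ :=
  (Denumerable.ofNat Nat.Partrec.Code w).eval u

namespace Formula

/-- Set semantics for nondeterministic partial recursive functions
(existential reading of ▷). -/
def semN (val : ℕ → Set ℕ) : Formula → Set ℕ
  | var p => val p
  | bot => ∅
  | imp a b => (Set.univ \ semN val a) ∪ semN val b
  | tri a b => {w | ∀ u ∈ semN val a, zeta w u ≠ ∅ → zeta w u ∩ semN val b ≠ ∅}

/-- Set semantics for deterministic partial recursive functions. -/
def semD (val : ℕ → Set ℕ) : Formula → Set ℕ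
  | var p => val p
  | bot => ∅
  | imp a b => (Set.univ \ semD val a) ∪ semD val b
  | tri a b => {w | ∀ u ∈ semD val a, ∀ h : (xi w u).Dom, (xi w u).get h ∈ semD val b}

/-- Universal set semantics for nondeterministic partial recursive functions:
every terminating computation path from φ* ends in ψ*. -/
def semU (val : ℕ → Set ℕ) : Formula → Set ℕ
  | var p => val p
  | bot => ∅
  | imp a b => (Set.univ \ semU val a) ∪ semU val b
  | tri a b => {w | ∀ u ∈ semU val a, zeta w u ⊆ semU val b}

/-- A canonical injective encoding of formulas as natural numbers. -/
def enc : Formula → ℕ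
  | var n => 4 * n
  | bot => 1
  | imp a b => 4 * Nat.pair (enc a) (enc b) + 2
  | tri a b => 4 * Nat.pair (enc a) (enc b) + 3

end Formula

open Formula in
/-- Fixed-point truth lemma: given a Kripke model with worlds w₁,…,wₙ and
pairwise distinct naturals u₁,…,uₙ such that ζ_{uᵢ}(x) = {u_k | ∃ j, x = u_j ∧
w_j →_{w_i} w_k} for all i and x, and the valuation p* = {uᵢ | wᵢ ⊩ p},
we have: uᵢ ∈ φ* iff wᵢ ⊩ φ, for every formula φ and every i. -/
theorem fixed_point_truth_lemma (M : KripkeModel) (n : ℕ)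
    (w : Fin n → M.W) (hw : Function.Bijective w)
    (u : Fin n → ℕ) (hu : Function.Injective u)
    (hfix : ∀ (i : Fin n) (x : ℕ),
      zeta (u i) x = {y | ∃ j k : Fin n, x = u j ∧ M.rel (w i) (w j) (w k) ∧ y = u k})
    (val : ℕ → Set ℕ)
    (hval : ∀ p : ℕ, val p = {y | ∃ i : Fin n, y = u i ∧ M.val (w i) p})
    (φ : Formula) (i : Fin n) :
    u i ∈ semN val φ ↔ M.Forces (w i) φ := by
  induction φ generalizing i with
  | var p =>
    simp only [semN, hval, Set.mem_setOf_eq, KripkeModel.Forces, Forces]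
    constructor
    · rintro ⟨j, hj, hvj⟩
      rwa [hu hj]
    · exact fun h => ⟨i, rfl, h⟩
  | bot => simp [semN, KripkeModel.Forces, Forces]
  | imp a b iha ihb =>
    simp only [semN, Set.mem_union, Set.mem_diff, Set.mem_univ, true_and,
      KripkeModel.Forces, Forces] at *
    rw [← iha i, ← ihb i]
    tauto
  | tri a b iha ihb =>
    simp only [semN, Set.mem_setOf_eq, KripkeModel.Forces, Forces] at *
    constructor
    · intro h x y hrel hfx
      obtain ⟨j, hj⟩ := hw.2 x
      obtain ⟨k, hk⟩ := hw.2 y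
      subst hj; subst hk
      have hne : zeta (u i) (u j) ≠ ∅ := by
        rw [hfix]
        intro he
        have : u k ∈ (∅ : Set ℕ) := he ▸ ⟨j, k, rfl, hrel, rfl⟩
        exact this
      have := h (u j) ((iha j).mpr hfx) hne
      obtain ⟨z, hz1, hz2⟩ := Set.nonempty_iff_ne_empty.mpr this
      rw [hfix] at hz1
      obtain ⟨j', k', hj', hrel', hk'⟩ := hz1
      have : j' = j := hu hj'.symm
      subst this; subst hk'
      exact ⟨w k', hrel', (ihb k').mp hz2⟩
    · intro h x hx hne
      obtain ⟨z, hz⟩ := Set.nonempty_iff_ne_empty.mpr hne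
      rw [hfix] at hz
      obtain ⟨j, k, hxj, hrel, hzk⟩ := hz
      subst hxj
      obtain ⟨v', hrel', hfv'⟩ := h (w j) (w k) hrel ((iha j).mp hx)
      obtain ⟨k', hk'⟩ := hw.2 v'
      subst hk'
      refine Set.nonempty_iff_ne_empty.mp ⟨u k', ?_, (ihb k').mpr hfv'⟩
      rw [hfix]
      exact ⟨j, k', rfl, hrel', rfl⟩
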